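/- arXiv:2403.01590 — 2 statements merged into one kernel-verified Lean document; each statement's English description precedes it below -/
import Mathlib

section
/- No single-head scalar self-attention (with softmax, scalar weights W^Q, W^K, W^V ∈ ℝ, hidden dimension 1) can express the count-in-row function on binary sequences of length 3. Specifically, there exist no real numbers W^Q, W^K, W^V such that the attention output O_3 = Σ_{j=1}^{3} [exp(W^Q x_3 · W^K x_j) / Σ_{k=1}^{3} exp(W^Q x_3 · W^K x_k)] · W^V x_j equals the count-in-row value y_3 simultaneously for the inputs (0,1,1), (0,0,1), and (1,0,1) (for which y_3 = 2, 1, 1 respectively). -/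
/-!
Softmax attention read at the last position sees the other positions only as a multiset of
key–value pairs, so it cannot tell `(0,1,1)` from its rearrangement `(1,0,1)`; count-in-row
assigns these the different values `2` and `1`.
-/

open Finset

/-- Scalar single-head softmax self-attention output at the last position (length 3). -/
noncomputable def att (Wq Wk Wv : ℝ) (x : Fin 3 → ℝ) : ℝ :=
  ∑ j : Fin 3,
    (Real.exp ((Wq * x 2) * (Wk * x j)) /
      ∑ k : Fin 3, Real.exp ((Wq * x 2) * (Wk * x k))) * (Wv * x j)

theorem att_comp_perm (Wq Wk Wv : ℝ) (x : Fin 3 → ℝ) (σ : Equiv.Perm (Fin 3)) (hσ : σ 2 = 2) :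
    att Wq Wk Wv (x ∘ σ) = att Wq Wk Wv x := by
  simp only [att, Function.comp_apply, hσ]
  rw [Equiv.sum_comp σ fun k => Real.exp (Wq * x 2 * (Wk * x k))]
  exact Equiv.sum_comp σ fun j => (Real.exp (Wq * x 2 * (Wk * x j)) /
    ∑ k, Real.exp (Wq * x 2 * (Wk * x k))) * (Wv * x j)

/-- No scalar softmax self-attention head expresses count-in-row on length-3 binary
sequences: the required outputs on (0,1,1), (0,0,1), (1,0,1) are 2, 1, 1. -/
theorem no_softmax_attention_count_in_row :
    ¬ ∃ Wq Wk Wv : ℝ,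
      att Wq Wk Wv ![0, 1, 1] = 2 ∧
      att Wq Wk Wv ![0, 0, 1] = 1 ∧
      att Wq Wk Wv ![1, 0, 1] = 1 := by
  rintro ⟨Wq, Wk, Wv, h011, -, h101⟩
  have hperm : (![0, 1, 1] : Fin 3 → ℝ) ∘ Equiv.swap 0 1 = ![1, 0, 1] := by
    ext i; fin_cases i <;> rfl
  have := att_comp_perm Wq Wk Wv ![0, 1, 1] (Equiv.swap 0 1) (by decide)
  rw [hperm, h101, h011] at this
  norm_num at this
end

section
/- With e = 1 and W^V = 3, the scalar softmax self-attention output at position 3 on input (1,0,1) equals 3·(2e)/(1+2e) = 2, which differs from the count-in-row value 1 at that position. Hence the three constraints from inputs (0,1,1), (0,0,1), (1,0,1) are jointly unsatisfiable. -/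
/-! The query is taken from the last token only, so the output is invariant under permuting
the earlier tokens; in particular `(0,1,1)` and `(1,0,1)` produce the same output and cannot
be sent to `2` and `1`. On `(1,0,1)` the scores are `e, 1, e` with `e = exp (W^Q W^K)`, giving
the closed form `W^V · 2e / (1 + 2e)`. -/

open Finset

theorem att_zero_one_one (Wq Wk Wv : ℝ) : att Wq Wk Wv ![0, 1, 1] = att Wq Wk Wv ![1, 0, 1] := by
  have hswap : (![0, 1, 1] : Fin 3 → ℝ) = ![1, 0, 1] ∘ Equiv.swap 0 1 := by
    ext i; fin_cases i <;> rfl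
  rw [hswap, att_comp_perm _ _ _ _ _ (by decide)]

theorem att_one_zero_one (Wq Wk Wv : ℝ) :
    att Wq Wk Wv ![1, 0, 1] =
      Wv * (2 * Real.exp (Wq * Wk)) / (1 + 2 * Real.exp (Wq * Wk)) := by
  simp only [att, Fin.sum_univ_three, Matrix.cons_val, mul_zero, mul_one, Real.exp_zero]
  field_simp
  ring

/-- With `exp (W^Q W^K) = 1` and `W^V = 3`, the attention output on `(1,0,1)` is
`3·(2·1)/(1+2·1) = 2 ≠ 1`; hence the three count-in-row constraints are jointly
unsatisfiable. -/
theorem attention_contradiction_on_101 :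
    (∀ Wq Wk Wv : ℝ, Real.exp (Wq * Wk) = 1 → Wv = 3 →
        att Wq Wk Wv ![1, 0, 1] = 2 ∧ (2 : ℝ) ≠ 1) ∧
    ¬ ∃ Wq Wk Wv : ℝ,
      att Wq Wk Wv ![0, 1, 1] = 2 ∧
      att Wq Wk Wv ![0, 0, 1] = 1 ∧
      att Wq Wk Wv ![1, 0, 1] = 1 := by
  refine ⟨fun Wq Wk Wv he hv => ⟨?_, by norm_num⟩, ?_⟩
  · rw [att_one_zero_one, he, hv]
    norm_num
  · rintro ⟨Wq, Wk, Wv, h011, -, h101⟩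
    rw [att_zero_one_one, h101] at h011
    norm_num at h011
end
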